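/- There is no infinite sequence a_1, a_2, ... of elements of ℕ^n such that for every index i there exists a coordinate j (depending on i) with a_{i,j} < a_{i',j} for all i' < i. -/

import Mathlib

theorem WellQuasiOrderedLE.exists_forall_exists_lt_apply_le {ι : Type*} {α : ι → Type*}
    [∀ i, Preorder (α i)] [WellQuasiOrderedLE (∀ i, α i)] (a : ℕ → ∀ i, α i) :
    ∃ k, ∀ j, ∃ k' < k, a k' j ≤ a k j := by
  obtain ⟨k', k, hk'k, hle⟩ := wellQuasiOrdered_le a
  exact ⟨k, fun j ↦ ⟨k', hk'k, hle j⟩⟩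

/-- There is no infinite sequence `a 0, a 1, ...` of elements of `ℕ^n` such that
for every index `i` there exists a coordinate `j` (depending on `i`) with
`a i j < a i' j` for all earlier indices `i' < i`. -/
theorem no_infinite_coordinatewise_descending_sequence (n : ℕ) :
    ¬ ∃ a : ℕ → (Fin n → ℕ), ∀ i : ℕ, ∃ j : Fin n, ∀ i' < i, a i j < a i' j := by
  rintro ⟨a, ha⟩
  -- Dickson's lemma (`Pi.wellQuasiOrderedLE`) is the instance found for `Fin n → ℕ`.
  obtain ⟨i, hi⟩ := WellQuasiOrderedLE.exists_forall_exists_lt_apply_le a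
  obtain ⟨j, hj⟩ := ha i
  obtain ⟨i', hi'i, hle⟩ := hi j
  exact (hj i' hi'i).not_ge hle
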